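/- arXiv:2111.01704 — 2 statements merged into one kernel-verified Lean document; each statement's English description precedes it below -/
import Mathlib

section
/- Let A, B, C be Boolean algebras and let f : C → A and g : C → B be injective Boolean algebra homomorphisms. Then there exist a Boolean algebra D and injective Boolean algebra homomorphisms i₁ : A → D and i₂ : B → D with i₁ ∘ f = i₂ ∘ g such that D is generated as a Boolean algebra by (range i₁) ∪ (range i₂), and for all a ∈ A and b ∈ B: i₁ a ≤ i₂ b if and only if there exists c ∈ C with a ≤ f c and g c ≤ b. -/
universe u v w

/-- A subset of a Boolean algebra closed under the Boolean operations and containing `⊥`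
and `⊤`. -/
def IsBooleanSubalgebra {B : Type*} [BooleanAlgebra B] (S : Set B) : Prop :=
  ⊥ ∈ S ∧ ⊤ ∈ S ∧ (∀ a ∈ S, ∀ b ∈ S, a ⊓ b ∈ S) ∧ (∀ a ∈ S, ∀ b ∈ S, a ⊔ b ∈ S) ∧
    ∀ a ∈ S, aᶜ ∈ S

/-- The Boolean subalgebra of `B` generated by a subset `X`. -/
def genBA {B : Type*} [BooleanAlgebra B] (X : Set B) : Set B :=
  ⋂₀ {S : Set B | IsBooleanSubalgebra S ∧ X ⊆ S}

/-- An ideal of a Boolean algebra: a nonempty subset that is downward closed and closed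
under binary joins. -/
def IsIdeal {B : Type*} [BooleanAlgebra B] (I : Set B) : Prop :=
  I.Nonempty ∧ (∀ a b : B, a ≤ b → b ∈ I → a ∈ I) ∧ ∀ a ∈ I, ∀ b ∈ I, a ⊔ b ∈ I

/-- `Y` is independent from `X` modulo `I` in the Boolean algebra `B` : for all finite
disjoint subsets `F₁, F₂` of `Y` and every element `a` of the Boolean subalgebra generated
by `X` with `a ∉ I`, the element `(⨅ y ∈ F₁, y) ⊓ (⨅ y ∈ F₂, yᶜ) ⊓ a` is not in `I`. -/
def IndepFrom {B : Type*} [BooleanAlgebra B] (Y X I : Set B) : Prop :=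
  ∀ F₁ F₂ : Finset B, ↑F₁ ⊆ Y → ↑F₂ ⊆ Y → Disjoint F₁ F₂ →
    ∀ a ∈ genBA X, a ∉ I → (F₁.inf id ⊓ F₂.inf (fun y => yᶜ) ⊓ a) ∉ I

section GenBA
variable {P : Type*} [BooleanAlgebra P]

theorem genBA_isSub (X : Set P) : IsBooleanSubalgebra (genBA X) := by
  refine ⟨?_, ?_, ?_, ?_, ?_⟩
  · exact fun S hS => hS.1.1
  · exact fun S hS => hS.1.2.1
  · exact fun a ha b hb S hS => hS.1.2.2.1 a (ha S hS) b (hb S hS)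
  · exact fun a ha b hb S hS => hS.1.2.2.2.1 a (ha S hS) b (hb S hS)
  · exact fun a ha S hS => hS.1.2.2.2.2 a (ha S hS)

theorem subset_genBA (X : Set P) : X ⊆ genBA X :=
  fun x hx S hS => hS.2 hx

theorem genBA_min {X S : Set P} (hS : IsBooleanSubalgebra S) (hXS : X ⊆ S) :
    genBA X ⊆ S :=
  Set.sInter_subset_of_mem ⟨hS, hXS⟩

/-- Ultrafilter separation: extend a filter `F` disjoint from an ideal `I` to a complete
(ultra) Boolean homomorphism to `Prop` which is true on `F` and false on `I`. -/
theorem ultra_sep (F I : Set P)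
    (hFtop : ⊤ ∈ F) (hFup : ∀ a b : P, a ≤ b → a ∈ F → b ∈ F)
    (hFinf : ∀ a ∈ F, ∀ b ∈ F, a ⊓ b ∈ F)
    (hIdown : ∀ a b : P, a ≤ b → b ∈ I → a ∈ I)
    (hIjoin : ∀ a ∈ I, ∀ b ∈ I, a ⊔ b ∈ I) (hbot : (⊥ : P) ∈ I)
    (hdis : ∀ x ∈ F, x ∉ I) :
    ∃ h : BoundedLatticeHom P Prop, (∀ x ∈ F, h x) ∧ ∀ x ∈ I, ¬ h x := by
  classical
  set S : Set (Set P) := {M | (⊤ ∈ M ∧ (∀ a b : P, a ≤ b → a ∈ M → b ∈ M) ∧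
      ∀ a ∈ M, ∀ b ∈ M, a ⊓ b ∈ M) ∧ F ⊆ M ∧ ∀ x ∈ M, x ∉ I} with hSdef
  obtain ⟨M, hFM, hMS, hMmax⟩ :
      ∃ M, F ⊆ M ∧ M ∈ S ∧ ∀ N ∈ S, M ⊆ N → N ⊆ M := by
    have hub : ∀ c ⊆ S, IsChain (· ⊆ ·) c → c.Nonempty → ∃ ub ∈ S, ∀ s ∈ c, s ⊆ ub := by
      rintro c hcS hchain ⟨M₀, hM₀⟩
      refine ⟨⋃₀ c, ⟨⟨?_, ?_, ?_⟩, ?_, ?_⟩, fun s hs => Set.subset_sUnion_of_mem hs⟩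
      · exact ⟨M₀, hM₀, (hcS hM₀).1.1⟩
      · rintro a b hab ⟨M₁, hM₁, haM₁⟩
        exact ⟨M₁, hM₁, (hcS hM₁).1.2.1 a b hab haM₁⟩
      · rintro a ⟨M₁, hM₁, ha⟩ b ⟨M₂, hM₂, hb⟩
        rcases hchain.total hM₁ hM₂ with h | h
        · exact ⟨M₂, hM₂, (hcS hM₂).1.2.2 a (h ha) b hb⟩
        · exact ⟨M₁, hM₁, (hcS hM₁).1.2.2 a ha b (h hb)⟩
      · exact fun x hx => ⟨M₀, hM₀, (hcS hM₀).2.1 hx⟩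
      · rintro x ⟨M₁, hM₁, hx⟩
        exact (hcS hM₁).2.2 x hx
    obtain ⟨M, h1, h2⟩ := zorn_subset_nonempty S hub F ⟨⟨hFtop, hFup, hFinf⟩, subset_rfl, hdis⟩
    exact ⟨M, h1, h2.1, fun N hN hMN => h2.2 hN hMN⟩
  obtain ⟨⟨hMtop, hMup, hMinf⟩, hFsubM, hMI⟩ := hMS
  -- completeness
  have hcomp : ∀ x : P, x ∈ M ∨ xᶜ ∈ M := by
    intro x
    by_contra hcon
    push_neg at hcon
    obtain ⟨hx, hxc⟩ := hcon
    have key : ∀ z : P, z ∉ M → ∃ m ∈ M, m ⊓ z ∈ I := by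
      intro z hz
      set N : Set P := {y | ∃ m ∈ M, m ⊓ z ≤ y} with hNdef
      have hMN : M ⊆ N := fun m hm => ⟨m, hm, inf_le_left⟩
      have hzN : z ∈ N := ⟨⊤, hMtop, inf_le_right⟩
      have hNS : N ∉ S := by
        intro hNS
        exact hz (hMmax N hNS hMN hzN)
      have : ¬ ∀ y ∈ N, y ∉ I := by
        intro hdisN
        apply hNS
        refine ⟨⟨⟨⊤, hMtop, le_top⟩, ?_, ?_⟩, fun y hy => hMN (hFsubM hy), hdisN⟩
        · rintro a b hab ⟨m, hm, hma⟩
          exact ⟨m, hm, hma.trans hab⟩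
        · rintro a ⟨m₁, hm₁, h₁⟩ b ⟨m₂, hm₂, h₂⟩
          exact ⟨m₁ ⊓ m₂, hMinf m₁ hm₁ m₂ hm₂,
            le_inf ((inf_le_inf_right z inf_le_left).trans h₁)
              ((inf_le_inf_right z inf_le_right).trans h₂)⟩
      push_neg at this
      obtain ⟨y, ⟨m, hm, hmy⟩, hyI⟩ := this
      exact ⟨m, hm, hIdown _ y hmy hyI⟩
    obtain ⟨m₁, hm₁, h₁⟩ := key x hx
    obtain ⟨m₂, hm₂, h₂⟩ := key xᶜ hxc
    have hmm : m₁ ⊓ m₂ ∈ M := hMinf m₁ hm₁ m₂ hm₂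
    have hle : m₁ ⊓ m₂ ≤ (m₁ ⊓ x) ⊔ (m₂ ⊓ xᶜ) := by
      have : m₁ ⊓ m₂ = ((m₁ ⊓ m₂) ⊓ x) ⊔ ((m₁ ⊓ m₂) ⊓ xᶜ) := sup_inf_inf_compl.symm
      rw [this]
      exact sup_le_sup (inf_le_inf_right x inf_le_left) (inf_le_inf_right xᶜ inf_le_right)
    exact hMI _ hmm (hIdown _ _ hle (hIjoin _ h₁ _ h₂))
  refine ⟨⟨⟨⟨fun x => x ∈ M, ?_⟩, ?_⟩, ?_, ?_⟩, fun x hx => hFsubM hx, fun x hx hxM => hMI x hxM hx⟩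
  · -- map_sup
    intro a b
    show (a ⊔ b ∈ M) = ((a ∈ M) ⊔ (b ∈ M))
    rw [eq_iff_iff]
    simp only [sup_Prop_eq]
    constructor
    · intro hab
      by_contra hcon
      push_neg at hcon
      obtain ⟨ha, hb⟩ := hcon
      have hac : aᶜ ∈ M := (hcomp a).resolve_left ha
      have hbc : bᶜ ∈ M := (hcomp b).resolve_left hb
      have : (a ⊔ b) ⊓ (aᶜ ⊓ bᶜ) ∈ M := hMinf _ hab _ (hMinf _ hac _ hbc)
      rw [← compl_sup, inf_compl_eq_bot] at this
      exact hMI ⊥ this hbot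
    · rintro (h | h)
      · exact hMup a _ le_sup_left h
      · exact hMup b _ le_sup_right h
  · -- map_inf
    intro a b
    show (a ⊓ b ∈ M) = ((a ∈ M) ⊓ (b ∈ M))
    rw [eq_iff_iff]
    simp only [inf_Prop_eq]
    exact ⟨fun h => ⟨hMup _ a inf_le_left h, hMup _ b inf_le_right h⟩,
      fun ⟨ha, hb⟩ => hMinf a ha b hb⟩
  · show (⊤ ∈ M) = (⊤ : Prop)
    rw [eq_iff_iff]; simp [hMtop]
  · show (⊥ ∈ M) = (⊥ : Prop)
    rw [eq_iff_iff]
    simp only [Prop.bot_eq_false, iff_false]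
    exact fun h => hMI ⊥ h hbot

-- Prop-valued hom helpers
theorem homP_top (wh : BoundedLatticeHom P Prop) : wh ⊤ := by
  rw [map_top]; trivial

theorem homP_bot (wh : BoundedLatticeHom P Prop) : ¬ wh ⊥ := by
  rw [map_bot]; exact id

theorem homP_inf (wh : BoundedLatticeHom P Prop) (x y : P) : wh (x ⊓ y) ↔ wh x ∧ wh y := by
  rw [map_inf]; simp [inf_Prop_eq]

theorem homP_compl (wh : BoundedLatticeHom P Prop) (x : P) : wh xᶜ ↔ ¬ wh x := by
  rw [map_compl']; simp [compl]

theorem homP_mono (wh : BoundedLatticeHom P Prop) {x y : P} (h : x ≤ y) : wh x → wh y :=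
  fun hx => (OrderHomClass.mono wh h) hx

/-- Extension lemma. -/
theorem extend_hom {C' B' : Type*} [BooleanAlgebra C'] [BooleanAlgebra B']
    (k : BoundedLatticeHom C' B') (wh : BoundedLatticeHom C' Prop) (b : B')
    (hb : ∀ c, wh c → ¬ k c ≤ b) :
    ∃ q : BoundedLatticeHom B' Prop, (∀ c, q (k c) ↔ wh c) ∧ ¬ q b := by
  obtain ⟨q, hq1, hq2⟩ := ultra_sep {y | ∃ c, wh c ∧ bᶜ ⊓ k c ≤ y} {y | y ≤ b}
    ⟨⊤, homP_top wh, le_top⟩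
    (by rintro y y' hyy' ⟨c, hc, hle⟩; exact ⟨c, hc, hle.trans hyy'⟩)
    (by
      rintro y ⟨c₁, hc₁, h₁⟩ y' ⟨c₂, hc₂, h₂⟩
      refine ⟨c₁ ⊓ c₂, (homP_inf wh c₁ c₂).mpr ⟨hc₁, hc₂⟩, ?_⟩
      rw [map_inf]
      exact le_inf ((inf_le_inf_left bᶜ inf_le_left).trans h₁)
        ((inf_le_inf_left bᶜ inf_le_right).trans h₂))
    (fun y y' hyy' hy' => hyy'.trans hy')
    (fun y hy y' hy' => sup_le hy hy')
    bot_le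
    (by
      rintro y ⟨c, hc, hle⟩ hyb
      have h1 : bᶜ ⊓ k c ≤ b ⊓ bᶜ := le_inf (hle.trans hyb) inf_le_left
      rw [inf_compl_eq_bot] at h1
      have hd : Disjoint bᶜ (k c) := disjoint_iff.mpr (le_bot_iff.mp h1)
      exact hb c hc (disjoint_compl_left_iff.mp hd))
  refine ⟨q, fun c => ⟨fun hqc => ?_, fun hc => hq1 (k c) ⟨c, hc, inf_le_right⟩⟩, hq2 b le_rfl⟩
  by_contra hwc
  have hwcc : wh cᶜ := (homP_compl wh c).mpr hwc
  have : q (k cᶜ) := hq1 (k cᶜ) ⟨cᶜ, hwcc, inf_le_right⟩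
  rw [map_compl'] at this
  exact ((homP_compl q (k c)).mp ((map_compl' k c) ▸ this)) hqc

/-- A principal ultrafilter-like hom containing a nonzero element. -/
theorem principal_hom {a : P} (ha : a ≠ ⊥) :
    ∃ p : BoundedLatticeHom P Prop, p a := by
  obtain ⟨p, hp1, _⟩ := ultra_sep {x | a ≤ x} {x | x ≤ ⊥}
    le_top (fun x y hxy hx => hx.trans hxy)
    (fun x hx y hy => le_inf hx hy)
    (fun x y hxy hy => hxy.trans hy)
    (fun x hx y hy => sup_le hx hy)
    le_rfl
    (fun x hx hxb => ha (le_bot_iff.mp (hx.trans hxb)))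
  exact ⟨p, hp1 a le_rfl⟩

end GenBA

section Main
variable {A : Type u} {B : Type v} {C : Type w}
  [BooleanAlgebra A] [BooleanAlgebra B] [BooleanAlgebra C]

/-- The space of compatible pairs of `Prop`-valued homs (i.e. points of the fibered
Stone space), with a third redundant component to land in the right universe. -/
def Amalg (f : BoundedLatticeHom C A) (g : BoundedLatticeHom C B) : Type (max u v w) :=
  {x : BoundedLatticeHom A Prop × BoundedLatticeHom B Prop × BoundedLatticeHom C Prop //
    (∀ c, x.1 (f c) ↔ x.2.2 c) ∧ ∀ c, x.2.1 (g c) ↔ x.2.2 c}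

variable (f : BoundedLatticeHom C A) (g : BoundedLatticeHom C B)

def jA : A → (Amalg f g → Prop) := fun a x => x.val.1 a
def jB : B → (Amalg f g → Prop) := fun b x => x.val.2.1 b

def DSet : Set (Amalg f g → Prop) := genBA (Set.range (jA f g) ∪ Set.range (jB f g))

abbrev Damalg : Type (max u v w) := {t : Amalg f g → Prop // t ∈ DSet f g}

namespace Damalg

noncomputable instance : Max (Damalg f g) :=
  ⟨fun s t => ⟨s.val ⊔ t.val, (genBA_isSub _).2.2.2.1 _ s.2 _ t.2⟩⟩
noncomputable instance : Min (Damalg f g) :=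
  ⟨fun s t => ⟨s.val ⊓ t.val, (genBA_isSub _).2.2.1 _ s.2 _ t.2⟩⟩
instance : Top (Damalg f g) := ⟨⟨⊤, (genBA_isSub _).2.1⟩⟩
instance : Bot (Damalg f g) := ⟨⟨⊥, (genBA_isSub _).1⟩⟩
instance : Compl (Damalg f g) := ⟨fun s => ⟨s.valᶜ, (genBA_isSub _).2.2.2.2 _ s.2⟩⟩
instance : SDiff (Damalg f g) :=
  ⟨fun s t => ⟨s.val \ t.val, by
    rw [sdiff_eq]
    exact (genBA_isSub _).2.2.1 _ s.2 _ ((genBA_isSub _).2.2.2.2 _ t.2)⟩⟩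
noncomputable instance : HImp (Damalg f g) :=
  ⟨fun s t => ⟨s.val ⇨ t.val, by
    rw [himp_eq]
    exact (genBA_isSub _).2.2.2.1 _ t.2 _ ((genBA_isSub _).2.2.2.2 _ s.2)⟩⟩

noncomputable instance : BooleanAlgebra (Damalg f g) :=
  Function.Injective.booleanAlgebra Subtype.val Subtype.val_injective Iff.rfl Iff.rfl
    (fun _ _ => rfl) (fun _ _ => rfl) rfl rfl (fun _ => rfl) (fun _ _ => rfl) (fun _ _ => rfl)

theorem le_iff (s t : Damalg f g) : s ≤ t ↔ s.val ≤ t.val := Iff.rfl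

end Damalg

def iA : BoundedLatticeHom A (Damalg f g) where
  toFun a := ⟨jA f g a, subset_genBA _ (Or.inl ⟨a, rfl⟩)⟩
  map_sup' a b := Subtype.ext (funext fun x => map_sup x.val.1 a b)
  map_inf' a b := Subtype.ext (funext fun x => map_inf x.val.1 a b)
  map_top' := Subtype.ext (funext fun x => map_top x.val.1)
  map_bot' := Subtype.ext (funext fun x => map_bot x.val.1)

def iB : BoundedLatticeHom B (Damalg f g) where
  toFun b := ⟨jB f g b, subset_genBA _ (Or.inr ⟨b, rfl⟩)⟩
  map_sup' a b := Subtype.ext (funext fun x => map_sup x.val.2.1 a b)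
  map_inf' a b := Subtype.ext (funext fun x => map_inf x.val.2.1 a b)
  map_top' := Subtype.ext (funext fun x => map_top x.val.2.1)
  map_bot' := Subtype.ext (funext fun x => map_bot x.val.2.1)

/-- Any hom on `A` extends to a point of the amalgam space, given `g` injective. -/
theorem exists_point_A (hg : Function.Injective g) (p : BoundedLatticeHom A Prop) :
    ∃ x : Amalg f g, x.val.1 = p := by
  set wh : BoundedLatticeHom C Prop := p.comp f with hw
  obtain ⟨q, hq1, _⟩ := extend_hom g wh ⊥ (by
    intro c hc hle
    have hcb : c = ⊥ := hg (by rw [le_bot_iff.mp hle, map_bot])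
    rw [hcb] at hc
    exact homP_bot wh hc)
  exact ⟨⟨(p, q, wh), fun c => Iff.rfl, fun c => hq1 c⟩, rfl⟩

theorem exists_point_B (hf : Function.Injective f) (q : BoundedLatticeHom B Prop) :
    ∃ x : Amalg f g, x.val.2.1 = q := by
  set wh : BoundedLatticeHom C Prop := q.comp g with hw
  obtain ⟨p, hp1, _⟩ := extend_hom f wh ⊥ (by
    intro c hc hle
    have hcb : c = ⊥ := hf (by rw [le_bot_iff.mp hle, map_bot])
    rw [hcb] at hc
    exact homP_bot wh hc)
  exact ⟨⟨(p, q, wh), fun c => hp1 c, fun c => Iff.rfl⟩, rfl⟩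

end Main

theorem inj_of_bot_reflect {P Q : Type*} [BooleanAlgebra P] [BooleanAlgebra Q]
    (h : BoundedLatticeHom P Q) (hb : ∀ t, h t = ⊥ → t = ⊥) : Function.Injective h := by
  intro a a' he
  have h1 : h (a \ a') = ⊥ := by rw [map_sdiff' h, he, sdiff_self]
  have h2 : h (a' \ a) = ⊥ := by rw [map_sdiff' h, he.symm, sdiff_self]
  exact le_antisymm (sdiff_eq_bot_iff.mp (hb _ h1)) (sdiff_eq_bot_iff.mp (hb _ h2))


/-- Existence of the free (pushout) amalgam of Boolean algebras with its internal
characterization: `D` is generated by the union of the images of `A` and `B`, and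
`i₁ a ≤ i₂ b` iff the inequality is interpolated by an element of `C`. -/
theorem boolean_algebra_pushout_internal_characterization
    {A : Type u} {B : Type v} {C : Type w}
    [BooleanAlgebra A] [BooleanAlgebra B] [BooleanAlgebra C]
    (f : BoundedLatticeHom C A) (g : BoundedLatticeHom C B)
    (hf : Function.Injective f) (hg : Function.Injective g) :
    ∃ (D : Type (max u v w)) (_ : BooleanAlgebra D)
      (i₁ : BoundedLatticeHom A D) (i₂ : BoundedLatticeHom B D),
      Function.Injective i₁ ∧ Function.Injective i₂ ∧
      (∀ c : C, i₁ (f c) = i₂ (g c)) ∧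
      genBA (Set.range ⇑i₁ ∪ Set.range ⇑i₂) = Set.univ ∧
      ∀ (a : A) (b : B), i₁ a ≤ i₂ b ↔ ∃ c : C, a ≤ f c ∧ g c ≤ b := by
  classical
  refine ⟨Damalg f g, inferInstance, iA f g, iB f g, ?_, ?_, ?_, ?_, ?_⟩
  · -- injectivity of i₁
    refine inj_of_bot_reflect _ fun t ht => ?_
    by_contra htne
    obtain ⟨p, hp⟩ := principal_hom htne
    obtain ⟨x, hx⟩ := exists_point_A f g hg p
    have h1 : jA f g t x = (⊥ : Amalg f g → Prop) x :=
      congrFun (congrArg Subtype.val ht) x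
    have h2 : x.val.1 t := hx ▸ hp
    simp only [jA] at h1
    rw [h1] at h2
    exact h2
  · -- injectivity of i₂
    refine inj_of_bot_reflect _ fun t ht => ?_
    by_contra htne
    obtain ⟨q, hq⟩ := principal_hom htne
    obtain ⟨x, hx⟩ := exists_point_B f g hf q
    have h1 : jB f g t x = (⊥ : Amalg f g → Prop) x :=
      congrFun (congrArg Subtype.val ht) x
    have h2 : x.val.2.1 t := hx ▸ hq
    simp only [jB] at h1
    rw [h1] at h2
    exact h2
  · -- compatibility
    intro c
    exact Subtype.ext (funext fun x => propext ((x.prop.1 c).trans (x.prop.2 c).symm))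
  · -- generation
    apply Set.eq_univ_of_forall
    intro d
    set G := genBA (Set.range ⇑(iA f g) ∪ Set.range ⇑(iB f g)) with hGdef
    have hG := genBA_isSub (Set.range ⇑(iA f g) ∪ Set.range ⇑(iB f g))
    have hU : IsBooleanSubalgebra (Subtype.val '' G) := by
      refine ⟨⟨⊥, hG.1, rfl⟩, ⟨⊤, hG.2.1, rfl⟩, ?_, ?_, ?_⟩
      · rintro x ⟨s, hs, rfl⟩ y ⟨t, ht, rfl⟩
        exact ⟨s ⊓ t, hG.2.2.1 s hs t ht, rfl⟩
      · rintro x ⟨s, hs, rfl⟩ y ⟨t, ht, rfl⟩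
        exact ⟨s ⊔ t, hG.2.2.2.1 s hs t ht, rfl⟩
      · rintro x ⟨s, hs, rfl⟩
        exact ⟨sᶜ, hG.2.2.2.2 s hs, rfl⟩
    have hsubU : Set.range (jA f g) ∪ Set.range (jB f g) ⊆ Subtype.val '' G := by
      rintro x (⟨a, rfl⟩ | ⟨b, rfl⟩)
      · exact ⟨iA f g a, subset_genBA _ (Or.inl ⟨a, rfl⟩), rfl⟩
      · exact ⟨iB f g b, subset_genBA _ (Or.inr ⟨b, rfl⟩), rfl⟩
    obtain ⟨e, heG, he⟩ := genBA_min hU hsubU d.2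
    rwa [Subtype.ext he] at heG
  · -- interpolation
    intro a b
    constructor
    · intro h
      by_contra Hc
      push_neg at Hc
      obtain ⟨wh, hwF, hwI⟩ := ultra_sep {c : C | a ≤ f c} {c : C | g c ≤ b}
        (by rw [Set.mem_setOf_eq, map_top]; exact le_top)
        (fun c c' hcc' hc => hc.trans (OrderHomClass.mono f hcc'))
        (fun c hc c' hc' => by rw [Set.mem_setOf_eq, map_inf]; exact le_inf hc hc')
        (fun c c' hcc' hc' => (OrderHomClass.mono g hcc').trans hc')
        (fun c hc c' hc' => by rw [Set.mem_setOf_eq, map_sup]; exact sup_le hc hc')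
        (by rw [Set.mem_setOf_eq, map_bot]; exact bot_le)
        (fun c hc => Hc c hc)
      obtain ⟨p, hp1, hp2⟩ := extend_hom f wh aᶜ (by
        intro c hc hle
        have h1 : a ≤ f cᶜ := by
          rw [map_compl']
          calc a = aᶜᶜ := (compl_compl a).symm
          _ ≤ (f c)ᶜ := compl_le_compl hle
        have := hwF cᶜ h1
        exact (homP_compl wh c).mp this hc)
      obtain ⟨q, hq1, hq2⟩ := extend_hom g wh b (fun c hc hle => hwI c hle hc)
      have hpa : p a := by
        by_contra hpa
        exact hp2 ((homP_compl p a).mpr hpa)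
      set x : Amalg f g := ⟨(p, q, wh), fun c => hp1 c, fun c => hq1 c⟩ with hxdef
      have hle : (iA f g a).val ≤ (iB f g b).val := (Damalg.le_iff f g _ _).mp h
      exact hq2 (hle x hpa)
    · rintro ⟨c, h1, h2⟩
      rw [Damalg.le_iff]
      intro x
      intro hxa
      have h3 : x.val.1 (f c) := homP_mono x.val.1 h1 hxa
      have h4 : x.val.2.1 (g c) := (x.prop.2 c).mpr ((x.prop.1 c).mp h3)
      exact homP_mono x.val.2.1 h2 h4
end

section
/- Let D be a Boolean algebra and let A and B be Boolean subalgebras of D such that D is generated as a Boolean algebra by A ∪ B. If a ∈ A ∩ B is an atom of the Boolean algebra A and also an atom of the Boolean algebra B, then a is an atom of D. -/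
section

variable {D : Type*} [BooleanAlgebra D]

theorem genBA_subset {X S : Set D} (hS : IsBooleanSubalgebra S) (hXS : X ⊆ S) :
    genBA X ⊆ S :=
  Set.sInter_subset_of_mem ⟨hS, hXS⟩

theorem isBooleanSubalgebra_setOf_inf_eq_self_or_bot (a : D) :
    IsBooleanSubalgebra {d : D | d ⊓ a = a ∨ d ⊓ a = ⊥} := by
  simp only [IsBooleanSubalgebra, Set.mem_ofPred_eq, inf_eq_right, ← disjoint_iff]
  refine ⟨Or.inr disjoint_bot_left, Or.inl le_top, ?_, ?_, ?_⟩
  · rintro x (hx | hx) y (hy | hy)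
    exacts [Or.inl (le_inf hx hy), Or.inr (hy.inf_left' x), Or.inr (hx.inf_left y),
      Or.inr (hx.inf_left y)]
  · rintro x (hx | hx) y (hy | hy)
    exacts [Or.inl (le_sup_of_le_left hx), Or.inl (le_sup_of_le_left hx),
      Or.inl (le_sup_of_le_right hy), Or.inr (disjoint_sup_left.2 ⟨hx, hy⟩)]
  · rintro x (hx | hx)
    exacts [Or.inr (disjoint_compl_left_iff.2 hx), Or.inl hx.symm.le_compl_right]

theorem isAtom_of_forall_inf_eq_self_or_bot {a : D} (ha : a ≠ ⊥)
    (h : ∀ c : D, c ⊓ a = a ∨ c ⊓ a = ⊥) : IsAtom a := by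
  refine isAtom_iff_le_of_ge.2 ⟨ha, fun b hb hba => ?_⟩
  rcases h b with hb' | hb'
  · exact inf_eq_right.1 hb'
  · exact absurd (by rwa [inf_eq_left.2 hba] at hb') hb

end

theorem isAtom_of_subalgebra_atoms_general {D : Type*} [BooleanAlgebra D]
    (A B : Set D)
    (hgen : genBA (A ∪ B) = Set.univ)
    (a : D) (ha : a ≠ ⊥)
    (hatomA : ∀ c ∈ A, c ⊓ a = a ∨ c ⊓ a = ⊥)
    (hatomB : ∀ c ∈ B, c ⊓ a = a ∨ c ⊓ a = ⊥) :
    IsAtom a := by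
  have hdecided : genBA (A ∪ B) ⊆ {d : D | d ⊓ a = a ∨ d ⊓ a = ⊥} :=
    genBA_subset (isBooleanSubalgebra_setOf_inf_eq_self_or_bot a)
      (Set.union_subset hatomA hatomB)
  exact isAtom_of_forall_inf_eq_self_or_bot ha fun c => hdecided (hgen ▸ Set.mem_univ c)

/-- If `D` is generated by the union of two Boolean subalgebras `A` and `B`, then any
common element that is an atom of both `A` and `B` is an atom of `D`. -/
theorem isAtom_of_subalgebra_atoms {D : Type*} [BooleanAlgebra D]
    (A B : Set D) (hA : IsBooleanSubalgebra A) (hB : IsBooleanSubalgebra B)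
    (hgen : genBA (A ∪ B) = Set.univ)
    (a : D) (haA : a ∈ A) (haB : a ∈ B) (ha : a ≠ ⊥)
    (hatomA : ∀ c ∈ A, c ⊓ a = a ∨ c ⊓ a = ⊥)
    (hatomB : ∀ c ∈ B, c ⊓ a = a ∨ c ⊓ a = ⊥) :
    IsAtom a :=
  isAtom_of_subalgebra_atoms_general A B hgen a ha hatomA hatomB
end
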